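/- arXiv:2509.05308 — 3 statements merged into one kernel-verified Lean document; each statement's English description precedes it below -/
import Mathlib

section
/- If f : [0,∞) → ℝ satisfies the Abel integral equation k = ∫₀^y f(z)/√(y−z) dz for all y > 0, where k > 0 is a constant, then f(z) = k/(π√z) for all z > 0. -/
open MeasureTheory Real Set Filter

/-!
Multiply the equation at `y` by `(x - y)^(-1/2)` and integrate over `y ∈ (0, x)`. After exchanging
the order of integration, the inner integral `∫_z^x dy / √((y - z)(x - y))` equals `π` (a primitive
is `arcsin ((2y - z - x) / (x - z))`), so `π ∫₀ˣ f = k ∫₀ˣ (x - y)^(-1/2) dy = 2k√x`.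
Differentiating in `x` at a point of continuity of `f` gives `π f(x) = k / √x`.
-/
theorem setIntegral_Ioo_eq_sub_of_hasDerivAt_of_nonneg {g g' : ℝ → ℝ} {a b : ℝ} (hab : a ≤ b)
    (hcont : ContinuousOn g (Icc a b)) (hderiv : ∀ x ∈ Ioo a b, HasDerivAt g (g' x) x)
    (hpos : ∀ x ∈ Ioo a b, 0 ≤ g' x) :
    ∫ x in Ioo a b, g' x = g b - g a := by
  rw [← integral_Ioc_eq_integral_Ioo, ← intervalIntegral.integral_of_le hab]
  exact intervalIntegral.integral_eq_sub_of_hasDerivAt_of_le hab hcont hderiv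
    ((intervalIntegrable_iff_integrableOn_Ioc_of_le hab).2
      (intervalIntegral.integrableOn_deriv_of_nonneg hcont hderiv hpos))

theorem hasDerivAt_arcsin_two_mul_sub_div {a b y : ℝ} (hy : y ∈ Ioo a b) :
    HasDerivAt (fun t => arcsin ((2 * t - (a + b)) / (b - a))) (√(y - a) * √(b - y))⁻¹ y := by
  obtain ⟨hay, hyb⟩ := hy
  have hba : 0 < b - a := by linarith
  have hlin : HasDerivAt (fun t : ℝ => (2 * t - (a + b)) / (b - a)) (2 / (b - a)) y := by
    simpa using (((hasDerivAt_id y).const_mul 2).sub_const (a + b)).div_const (b - a)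
  have hlt : (2 * y - (a + b)) / (b - a) < 1 := by rw [div_lt_one hba]; linarith
  have hgt : -1 < (2 * y - (a + b)) / (b - a) := by rw [lt_div_iff₀ hba]; linarith
  refine ((hasDerivAt_arcsin hgt.ne' hlt.ne).comp y hlin).congr_deriv ?_
  have hsqrt : √(1 - ((2 * y - (a + b)) / (b - a)) ^ 2) = 2 * (√(y - a) * √(b - y)) / (b - a) := by
    rw [← sqrt_sq (by positivity : 0 ≤ 2 * (√(y - a) * √(b - y)) / (b - a))]
    congr 1
    rw [div_pow, div_pow, mul_pow, mul_pow, sq_sqrt (by linarith), sq_sqrt (by linarith)]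
    field_simp
    ring
  have : 0 < √(y - a) * √(b - y) :=
    mul_pos (sqrt_pos.2 (sub_pos.2 hay)) (sqrt_pos.2 (sub_pos.2 hyb))
  rw [hsqrt]
  field_simp

theorem integrableOn_inv_sqrt_mul_sqrt (a b : ℝ) :
    IntegrableOn (fun y => (√(y - a) * √(b - y))⁻¹) (Ioo a b) :=
  (intervalIntegral.integrableOn_deriv_of_nonneg (by fun_prop)
    (fun y hy => hasDerivAt_arcsin_two_mul_sub_div hy) (fun y _ => by positivity)).mono_set
    Ioo_subset_Ioc_self

theorem integral_inv_sqrt_mul_sqrt {a b : ℝ} (hab : a < b) :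
    ∫ y in Ioo a b, (√(y - a) * √(b - y))⁻¹ = π := by
  have hba : 0 < b - a := by linarith
  rw [setIntegral_Ioo_eq_sub_of_hasDerivAt_of_nonneg hab.le (by fun_prop)
    (fun y hy => hasDerivAt_arcsin_two_mul_sub_div hy) (fun y _ => by positivity)]
  rw [show (2 * b - (a + b)) / (b - a) = 1 by field_simp; ring,
    show (2 * a - (a + b)) / (b - a) = -1 by field_simp; ring, arcsin_one, arcsin_neg_one]
  ring

theorem integral_inv_sqrt_sub {a b : ℝ} (hab : a ≤ b) :
    ∫ y in Ioo a b, (√(b - y))⁻¹ = 2 * √(b - a) := by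
  have hderiv : ∀ y ∈ Ioo a b, HasDerivAt (fun t => -(2 * √(b - t))) (√(b - y))⁻¹ y := by
    intro y hy
    have hpos : 0 < b - y := sub_pos.2 hy.2
    refine ((((hasDerivAt_id' y).const_sub b).sqrt hpos.ne').const_mul 2).neg.congr_deriv ?_
    have := (sqrt_pos.2 hpos).ne'
    field_simp
  rw [setIntegral_Ioo_eq_sub_of_hasDerivAt_of_nonneg hab (by fun_prop) hderiv
    (fun y _ => by positivity)]
  simp

theorem integrableOn_Ioo_of_integrableOn_div_sqrt_sub {f : ℝ → ℝ} {a b : ℝ}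
    (h : IntegrableOn (fun z => f z / √(b - z)) (Icc a b)) : IntegrableOn f (Ioo a b) := by
  refine ((h.continuousOn_mul (g := fun z => √(b - z)) (by fun_prop) isCompact_Icc).mono_set
    Ioo_subset_Icc_self).congr_fun (fun z hz => ?_) measurableSet_Ioo
  have := (sqrt_pos.2 (sub_pos.2 hz.2)).ne'
  field_simp

theorem integral_Ioo_integral_div_sqrt_div_sqrt {f : ℝ → ℝ} {a x : ℝ}
    (hf : IntegrableOn f (Ioo a x)) :
    ∫ y in Ioo a x, (∫ z in Ioo a y, f z / √(y - z)) / √(x - y) = π * ∫ z in Ioo a x, f z := by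
  set μ := volume.restrict (Ioo a x)
  -- The kernel vanishes off the triangle `z < y` by itself, through this junk value of `√`.
  have hvanish : ∀ y z : ℝ, y ≤ z → √(y - z) = 0 := fun y z h => sqrt_eq_zero'.2 (sub_nonpos.2 h)
  set F : ℝ × ℝ → ℝ := fun p => f p.2 * (√(p.1 - p.2) * √(x - p.1))⁻¹
  have hkernel_int : ∀ z ∈ Ioo a x, Integrable (fun y => (√(y - z) * √(x - y))⁻¹) μ :=
    fun z hz => (integrableOn_inv_sqrt_mul_sqrt z x).of_forall_sdiff_eq_zero measurableSet_Ioo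
      fun y hy => by simp [hvanish y z (not_lt.1 fun h => hy.2 ⟨h, hy.1.2⟩)]
  have hkernel : ∀ z ∈ Ioo a x, ∫ y, (√(y - z) * √(x - y))⁻¹ ∂μ = π := fun z hz => by
    rw [setIntegral_eq_of_subset_of_forall_sdiff_eq_zero measurableSet_Ioo
      (Ioo_subset_Ioo_left hz.1.le) fun y hy => ?_, integral_inv_sqrt_mul_sqrt hz.2]
    simp [hvanish y z (not_lt.1 fun h => hy.2 ⟨h, hy.1.2⟩)]
  have hF_int : Integrable F (μ.prod μ) := by
    have hF_meas : AEStronglyMeasurable F (μ.prod μ) :=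
      hf.aestronglyMeasurable.comp_snd.mul (by fun_prop)
    rw [integrable_prod_iff' hF_meas]
    refine ⟨?_, (hf.norm.mul_const π).congr ?_⟩ <;>
      filter_upwards [ae_restrict_mem measurableSet_Ioo] with z hz
    · exact (hkernel_int z hz).const_mul (f z)
    · simp only [F, norm_mul, norm_inv, Real.norm_of_nonneg (by positivity : 0 ≤ √_ * √_)]
      rw [integral_const_mul, hkernel z hz]
  have hinner_z : ∀ y ∈ Ioo a x, ∫ z, F (y, z) ∂μ = (∫ z in Ioo a y, f z / √(y - z)) / √(x - y) :=
    fun y hy => by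
    have hF : ∀ z, F (y, z) = f z / √(y - z) / √(x - y) := fun z => by
      simp only [F, div_eq_mul_inv, mul_inv, mul_assoc]
    simp only [hF, integral_div]
    rw [setIntegral_eq_of_subset_of_forall_sdiff_eq_zero measurableSet_Ioo
      (Ioo_subset_Ioo_right hy.2.le) fun z hz => ?_]
    simp [hvanish y z (not_lt.1 fun h => hz.2 ⟨hz.1.1, h⟩)]
  have hinner_y : ∀ z ∈ Ioo a x, ∫ y, F (y, z) ∂μ = f z * π := fun z hz => by
    simp only [F, integral_const_mul, hkernel z hz]
  calc ∫ y in Ioo a x, (∫ z in Ioo a y, f z / √(y - z)) / √(x - y)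
      = ∫ y, ∫ z, F (y, z) ∂μ ∂μ := (setIntegral_congr_fun measurableSet_Ioo hinner_z).symm
    _ = ∫ z, ∫ y, F (y, z) ∂μ ∂μ := integral_integral_swap hF_int
    _ = ∫ z in Ioo a x, f z * π := setIntegral_congr_fun measurableSet_Ioo hinner_y
    _ = π * ∫ z in Ioo a x, f z := by rw [integral_mul_const, mul_comm]

theorem abel_integral_equation_solution_general
    (k : ℝ) (f : ℝ → ℝ)
    (hf : ContinuousOn f (Set.Ioi 0))
    (hint : ∀ y > (0:ℝ), IntervalIntegrable (fun z => f z / Real.sqrt (y - z))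
      MeasureTheory.volume 0 y)
    (heq : ∀ y > (0:ℝ), ∫ z in (0:ℝ)..y, f z / Real.sqrt (y - z) = k) :
    ∀ z > (0:ℝ), f z = k / (Real.pi * Real.sqrt z) := by
  have hf_int : ∀ x > 0, IntegrableOn f (Ioo 0 x) := fun x hx =>
    integrableOn_Ioo_of_integrableOn_div_sqrt_sub
      ((intervalIntegrable_iff_integrableOn_Icc_of_le hx.le).1 (hint x hx))
  have hprimitive : ∀ x > 0, ∫ z in (0:ℝ)..x, f z = 2 * k / π * √x := by
    intro x hx
    have h := integral_Ioo_integral_div_sqrt_div_sqrt (hf_int x hx)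
    rw [setIntegral_congr_fun measurableSet_Ioo fun y hy => by
      rw [← integral_Ioc_eq_integral_Ioo, ← intervalIntegral.integral_of_le hy.1.le,
        heq y hy.1]] at h
    simp only [div_eq_mul_inv] at h
    rw [integral_const_mul, integral_inv_sqrt_sub hx.le, sub_zero] at h
    rw [intervalIntegral.integral_of_le hx.le, integral_Ioc_eq_integral_Ioo]
    field_simp
    linarith
  intro z hz
  have hderiv : HasDerivAt (fun t => ∫ u in (0:ℝ)..t, f u) (f z) z :=
    intervalIntegral.integral_hasDerivAt_right
      ((intervalIntegrable_iff_integrableOn_Ioo_of_le hz.le).2 (hf_int z hz))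
      (hf.stronglyMeasurableAtFilter isOpen_Ioi z hz) (hf.continuousAt (Ioi_mem_nhds hz))
  have hderiv' : HasDerivAt (fun t => ∫ u in (0:ℝ)..t, f u) (2 * k / π * (1 / (2 * √z))) z :=
    ((hasDerivAt_sqrt hz.ne').const_mul _).congr_of_eventuallyEq
      (eventually_of_mem (Ioi_mem_nhds hz) hprimitive)
  rw [hderiv.unique hderiv']
  field_simp

/-- If `f` satisfies the Abel integral equation `k = ∫₀^y f(z)/√(y−z) dz` for all
`y > 0` with `k > 0` constant, then `f(z) = k/(π√z)` for all `z > 0`. -/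
theorem abel_integral_equation_solution
    (k : ℝ) (hk : 0 < k) (f : ℝ → ℝ)
    (hf : ContinuousOn f (Set.Ioi 0))
    (hint : ∀ y > (0:ℝ), IntervalIntegrable (fun z => f z / Real.sqrt (y - z))
      MeasureTheory.volume 0 y)
    (heq : ∀ y > (0:ℝ), ∫ z in (0:ℝ)..y, f z / Real.sqrt (y - z) = k) :
    ∀ z > (0:ℝ), f z = k / (Real.pi * Real.sqrt z) :=
  abel_integral_equation_solution_general k f hf hint heq
end

section
/- The descent time along the inverted cycloid x(θ) = r(θ + sin θ), y(θ) = r(1 − cos θ), from any starting angle θ₀ ∈ (0, π) (at height y₀ = y(θ₀)) down to the vertex θ = 0, equals π√(r/g), independent of θ₀. -/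
open MeasureTheory intervalIntegral Real

open Set

/-! Write `s = sin (θ/2)` and `a = sin (θ₀/2)`. On the cycloid the speed `|(x', y')|` is
`2 r cos (θ/2)` and the height drop `y θ₀ - y θ` is `2 r (a² - s²)`, so the integrand is
`√(r/g) · cos (θ/2) / √(a² - s²)`, the derivative of `2 √(r/g) · arcsin (s / a)`. This antiderivative
rises from `0` at the vertex to `2 √(r/g) · arcsin 1 = π √(r/g)` at `θ₀`, whatever `θ₀` is. The
integrand blows up at `θ₀`, but being nonnegative it is integrable by the fundamental theorem of
calculus for nonnegative derivatives. -/

theorem integral_eq_sub_of_hasDerivAt_of_nonneg {f f' : ℝ → ℝ} {a b : ℝ} (hab : a ≤ b)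
    (hcont : ContinuousOn f (Icc a b)) (hderiv : ∀ x ∈ Ioo a b, HasDerivAt f (f' x) x)
    (hnonneg : ∀ x ∈ Ioo a b, 0 ≤ f' x) : ∫ x in a..b, f' x = f b - f a := by
  refine integral_eq_sub_of_hasDerivAt_of_le hab hcont hderiv
    (intervalIntegrable_deriv_of_nonneg (by rwa [uIcc_of_le hab]) ?_ ?_) <;>
  rwa [min_eq_left hab, max_eq_right hab]

theorem one_sub_cos_eq_two_mul_sin_half_sq (θ : ℝ) : 1 - cos θ = 2 * sin (θ / 2) ^ 2 := by
  rw [sin_sq_eq_half_sub, mul_div_cancel₀ θ two_ne_zero]; ring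

theorem one_add_cos_eq_two_mul_cos_half_sq (θ : ℝ) : 1 + cos θ = 2 * cos (θ / 2) ^ 2 := by
  rw [cos_sq, mul_div_cancel₀ θ two_ne_zero]; ring

theorem deriv_cycloid_x (r θ : ℝ) : deriv (fun θ => r * (θ + sin θ)) θ = r * (1 + cos θ) :=
  (((hasDerivAt_id θ).add (hasDerivAt_sin θ)).const_mul r).deriv

theorem deriv_cycloid_y (r θ : ℝ) : deriv (fun θ => r * (1 - cos θ)) θ = r * sin θ := by
  simp

theorem sqrt_cycloid_speed_sq {r θ : ℝ} (hr : 0 ≤ r) (hθ : 0 ≤ cos (θ / 2)) :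
    √((r * (1 + cos θ)) ^ 2 + (r * sin θ) ^ 2) = 2 * r * cos (θ / 2) := by
  rw [← sqrt_sq (by positivity : 0 ≤ 2 * r * cos (θ / 2))]
  congr 1
  linear_combination
    r ^ 2 * sin_sq_add_cos_sq θ + 2 * r ^ 2 * one_add_cos_eq_two_mul_cos_half_sq θ

theorem cycloid_height_sub (r θ₀ θ : ℝ) :
    r * (1 - cos θ₀) - r * (1 - cos θ) = 2 * r * (sin (θ₀ / 2) ^ 2 - sin (θ / 2) ^ 2) := by
  rw [one_sub_cos_eq_two_mul_sin_half_sq, one_sub_cos_eq_two_mul_sin_half_sq]; ring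

theorem hasDerivAt_two_mul_arcsin_sin_half_div {a θ : ℝ} (h : |sin (θ / 2)| < a) :
    HasDerivAt (fun θ => 2 * arcsin (sin (θ / 2) / a))
      (cos (θ / 2) / √(a ^ 2 - sin (θ / 2) ^ 2)) θ := by
  have ha : 0 < a := (abs_nonneg _).trans_lt h
  have hlt : |sin (θ / 2) / a| < 1 := by rwa [abs_div, abs_of_pos ha, div_lt_one ha]
  obtain ⟨hlo, hhi⟩ := abs_lt.1 hlt
  have hsin : HasDerivAt (fun θ => sin (θ / 2) / a) (cos (θ / 2) * (1 / 2) / a) θ :=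
    ((hasDerivAt_sin _).comp θ ((hasDerivAt_id θ).div_const 2)).div_const a
  refine (((hasDerivAt_arcsin hlo.ne' hhi.ne).comp θ hsin).const_mul 2).congr_deriv ?_
  have hD : 0 < a ^ 2 - sin (θ / 2) ^ 2 := by
    nlinarith [abs_nonneg (sin (θ / 2)), sq_abs (sin (θ / 2))]
  rw [show 1 - (sin (θ / 2) / a) ^ 2 = (a ^ 2 - sin (θ / 2) ^ 2) / a ^ 2 by field_simp,
    sqrt_div hD.le, sqrt_sq ha.le]
  field_simp [(sqrt_pos.2 hD).ne']

theorem cycloid_descent_integrand_eq {r g θ₀ θ : ℝ} (hr : 0 < r) (hg : 0 < g)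
    (hθ : 0 ≤ cos (θ / 2)) :
    √((deriv (fun θ => r * (θ + sin θ)) θ) ^ 2 +
        (deriv (fun θ => r * (1 - cos θ)) θ) ^ 2) /
        √(2 * g * (r * (1 - cos θ₀) - r * (1 - cos θ)))
      = √(r / g) * (cos (θ / 2) / √(sin (θ₀ / 2) ^ 2 - sin (θ / 2) ^ 2)) := by
  have hscale : √(r / g) = 2 * r / √(4 * g * r) := by
    rw [← sqrt_sq (by positivity : 0 ≤ 2 * r), ← sqrt_div' _ (by positivity)]
    congr 1
    field_simp
    ring
  rw [deriv_cycloid_x, deriv_cycloid_y, sqrt_cycloid_speed_sq hr.le hθ, cycloid_height_sub,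
    show 2 * g * (2 * r * (sin (θ₀ / 2) ^ 2 - sin (θ / 2) ^ 2))
      = 4 * g * r * (sin (θ₀ / 2) ^ 2 - sin (θ / 2) ^ 2) by ring,
    sqrt_mul (by positivity), hscale]
  ring

/-- Tautochrone property: the descent time along the inverted cycloid from any angle
`θ₀ ∈ (0, π)` to the vertex equals `π√(r/g)`, independent of `θ₀`. -/
theorem cycloid_tautochrone
    (r g : ℝ) (hr : 0 < r) (hg : 0 < g)
    (x y : ℝ → ℝ)
    (hx : x = fun θ => r * (θ + Real.sin θ))
    (hy : y = fun θ => r * (1 - Real.cos θ)) :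
    ∀ θ₀ ∈ Set.Ioo 0 Real.pi,
      (∫ θ in (0:ℝ)..θ₀,
        Real.sqrt ((deriv x θ) ^ 2 + (deriv y θ) ^ 2) /
          Real.sqrt (2 * g * (y θ₀ - y θ)))
        = Real.pi * Real.sqrt (r / g) := by
  rintro θ₀ ⟨hθ₀, hθ₀π⟩
  subst hx hy
  have ha : 0 < sin (θ₀ / 2) := sin_pos_of_pos_of_lt_pi (by linarith) (by linarith)
  have hsin_lt : ∀ θ ∈ Ioo 0 θ₀, |sin (θ / 2)| < sin (θ₀ / 2) := by
    rintro θ ⟨hθ, hθθ₀⟩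
    rw [abs_of_pos (sin_pos_of_pos_of_lt_pi (by linarith) (by linarith))]
    exact strictMonoOn_sin ⟨by linarith, by linarith⟩ ⟨by linarith, by linarith⟩ (by linarith)
  have hcos : ∀ θ ∈ Ioo 0 θ₀, 0 ≤ cos (θ / 2) := fun θ ⟨hθ, hθθ₀⟩ =>
    cos_nonneg_of_mem_Icc ⟨by linarith, by linarith⟩
  rw [integral_eq_sub_of_hasDerivAt_of_nonneg
    (f := fun θ => √(r / g) * (2 * arcsin (sin (θ / 2) / sin (θ₀ / 2))))
    hθ₀.le (by fun_prop) ?deriv (fun θ _ => by positivity)]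
  · simp only [zero_div, sin_zero, arcsin_zero, div_self ha.ne', arcsin_one]
    ring
  case deriv =>
    intro θ hθ
    rw [cycloid_descent_integrand_eq hr hg (hcos θ hθ)]
    exact (hasDerivAt_two_mul_arcsin_sin_half_div (hsin_lt θ hθ)).const_mul _
end

section
/- Left-inverse property: for 0 < α < 1 and f continuous on [0,∞), the Riemann–Liouville fractional derivative of order α applied to the Riemann–Liouville fractional integral of order α of f recovers f: D^α(I^α f)(x) = f(x) for x > 0. -/
open MeasureTheory intervalIntegral Real

/-- Riemann–Liouville fractional integral with base point 0. -/
noncomputable def RLint (α : ℝ) (f : ℝ → ℝ) (x : ℝ) : ℝ :=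
  (1 / Real.Gamma α) * ∫ t in (0:ℝ)..x, (x - t) ^ (α - 1) * f t

/-- Riemann–Liouville fractional derivative of order `α ∈ (0,1)` with base point 0. -/
noncomputable def RLderiv (α : ℝ) (g : ℝ → ℝ) (x : ℝ) : ℝ :=
  (1 / Real.Gamma (1 - α)) * deriv (fun u => ∫ t in (0:ℝ)..u, (u - t) ^ (-α) * g t) x

/-!
Up to its normalisation, `D^α` is `d/dx ∘ I^(1-α)`, so the theorem follows from the semigroup law
`I^(1-α) (I^α f) = I^1 f = ∫₀^x f` and the fundamental theorem of calculus. The semigroup law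
`I^b (I^a f) = I^(a+b) f` is Fubini on the triangle `0 < s ≤ t ≤ u`: the inner integral
`∫ₛᵘ (u - t)^(b-1) (t - s)^(a-1) dt` is a Beta integral, `Γ(a) Γ(b) / Γ(a+b) · (u - s)^(a+b-1)`.
-/

open Set Function

section Fubini

variable {E : Type*} [NormedAddCommGroup E] [NormedSpace ℝ E]

theorem setIntegral_Ioc_indicator_Iic {g : ℝ → E} {t u : ℝ} (ht : t ∈ Ioc 0 u) :
    ∫ s in Ioc 0 u, (Iic t).indicator g s = ∫ s in 0..t, g s := by
  rw [MeasureTheory.integral_indicator measurableSet_Iic,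
    Measure.restrict_restrict measurableSet_Iic, Iic_inter_Ioc_of_le ht.2, integral_of_le ht.1.le]

theorem integral_integral_swap_triangle {F : ℝ → ℝ → E} {u : ℝ} (hu : 0 ≤ u)
    (hF : Integrable ({p : ℝ × ℝ | p.2 ≤ p.1}.indicator (uncurry F))
      ((volume.restrict (Ioc 0 u)).prod (volume.restrict (Ioc 0 u)))) :
    ∫ t in 0..u, ∫ s in 0..t, F t s = ∫ s in 0..u, ∫ t in s..u, F t s := by
  set G : ℝ → ℝ → E := fun t s => {p : ℝ × ℝ | p.2 ≤ p.1}.indicator (uncurry F) (t, s)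
  have hrow : EqOn (fun t => ∫ s in Ioc 0 u, G t s) (fun t => ∫ s in 0..t, F t s) (Ioc 0 u) := by
    intro t ht
    have hG : G t = (Iic t).indicator (F t) := by ext s; simp [G, indicator_apply]
    beta_reduce
    rw [hG, setIntegral_Ioc_indicator_Iic ht]
  have hcol : EqOn (fun s => ∫ t in Ioc 0 u, G t s) (fun s => ∫ t in s..u, F t s) (Ioc 0 u) := by
    intro s hs
    have hG : (G · s) = (Ici s).indicator (F · s) := by ext t; simp [G, indicator_apply]
    have hIcc : Ici s ∩ Ioc 0 u = Icc s u := by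
      ext t; simp only [mem_inter_iff, mem_Ici, mem_Ioc, mem_Icc]; grind [hs.1]
    beta_reduce
    rw [hG, MeasureTheory.integral_indicator measurableSet_Ici,
      Measure.restrict_restrict measurableSet_Ici, hIcc, integral_Icc_eq_integral_Ioc,
      integral_of_le hs.2]
  rw [integral_of_le hu, integral_of_le hu, ← setIntegral_congr_fun measurableSet_Ioc hrow,
    ← setIntegral_congr_fun measurableSet_Ioc hcol, integral_integral_swap (f := G) hF]

end Fubini

section Kernel

variable {a b u : ℝ}

theorem intervalIntegrable_sub_rpow {r : ℝ} (hr : -1 < r) (t : ℝ) :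
    IntervalIntegrable (fun s => (t - s) ^ r) volume 0 t := by
  simpa using ((intervalIntegrable_rpow' hr (a := 0) (b := t)).comp_sub_left t).symm

theorem integral_sub_rpow (ha : 0 < a) (t : ℝ) :
    ∫ s in 0..t, (t - s) ^ (a - 1) = t ^ a / a := by
  rw [intervalIntegral.integral_comp_sub_left (fun x => x ^ (a - 1)) t]
  simp [integral_rpow (Or.inl (by linarith : (-1:ℝ) < a - 1)), ha.ne']

theorem integral_rpow_mul_sub_rpow (ha : 0 < a) (hb : 0 < b) {c : ℝ} (hc : 0 < c) :
    ∫ x in 0..c, x ^ (a - 1) * (c - x) ^ (b - 1) =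
      Gamma a * Gamma b / Gamma (a + b) * c ^ (a + b - 1) := by
  apply Complex.ofReal_injective
  have hbeta := Complex.betaIntegral_scaled a b hc
  rw [Complex.betaIntegral_eq_Gamma_mul_div _ _ (by simpa) (by simpa), ← Complex.ofReal_add,
    Complex.Gamma_ofReal, Complex.Gamma_ofReal, Complex.Gamma_ofReal, ← Complex.ofReal_mul,
    ← Complex.ofReal_div] at hbeta
  rw [← intervalIntegral.integral_ofReal, Complex.ofReal_mul, Complex.ofReal_cpow hc.le,
    Complex.ofReal_sub, Complex.ofReal_one, mul_comm, ← hbeta]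
  refine intervalIntegral.integral_congr fun x hx => ?_
  rw [uIcc_of_le hc.le] at hx
  push_cast
  rw [Complex.ofReal_cpow hx.1, Complex.ofReal_cpow (sub_nonneg.2 hx.2)]
  push_cast
  rfl

theorem integral_sub_rpow_mul_sub_rpow (ha : 0 < a) (hb : 0 < b) {s : ℝ} (hsu : s < u) :
    ∫ t in s..u, (u - t) ^ (b - 1) * (t - s) ^ (a - 1) =
      Gamma a * Gamma b / Gamma (a + b) * (u - s) ^ (a + b - 1) := by
  have hshift := intervalIntegral.integral_comp_sub_right
    (fun x => x ^ (a - 1) * (u - s - x) ^ (b - 1)) s (a := s) (b := u)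
  simp only [sub_self, sub_sub_sub_cancel_right] at hshift
  simp_rw [← integral_rpow_mul_sub_rpow ha hb (sub_pos.2 hsu), ← hshift, mul_comm]

theorem integrable_triangle_kernel (ha : 0 < a) (hb : 0 < b) :
    Integrable
      ({p : ℝ × ℝ | p.2 ≤ p.1}.indicator fun p => (u - p.1) ^ (b - 1) * (p.1 - p.2) ^ (a - 1))
      ((volume.restrict (Ioc 0 u)).prod (volume.restrict (Ioc 0 u))) := by
  set K : ℝ × ℝ → ℝ :=
    {p : ℝ × ℝ | p.2 ≤ p.1}.indicator fun p => (u - p.1) ^ (b - 1) * (p.1 - p.2) ^ (a - 1)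
  have hK : Measurable K :=
    (by fun_prop : Measurable _).indicator (measurableSet_le measurable_snd measurable_fst)
  have hrow (t : ℝ) :
      (fun s => K (t, s)) = (Iic t).indicator fun s => (u - t) ^ (b - 1) * (t - s) ^ (a - 1) := by
    ext s; simp [K, indicator_apply]
  have hrow_norm : ∀ t ∈ Ioc 0 u, ∫ s in Ioc 0 u, ‖K (t, s)‖ = (u - t) ^ (b - 1) * (t ^ a / a) := by
    intro t ht
    simp_rw [congrFun (hrow t), norm_indicator_eq_indicator_norm]
    rw [setIntegral_Ioc_indicator_Iic ht, ← integral_sub_rpow ha,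
      ← intervalIntegral.integral_const_mul]
    refine integral_congr fun s hs => ?_
    rw [uIcc_of_le ht.1.le] at hs
    exact norm_of_nonneg
      (mul_nonneg (rpow_nonneg (sub_nonneg.2 ht.2) _) (rpow_nonneg (sub_nonneg.2 hs.2) _))
  rw [integrable_prod_iff hK.aestronglyMeasurable]
  constructor
  · filter_upwards [ae_restrict_mem measurableSet_Ioc] with t ht
    rw [hrow, integrable_indicator_iff measurableSet_Iic, IntegrableOn,
      Measure.restrict_restrict measurableSet_Iic, Iic_inter_Ioc_of_le ht.2]
    exact (intervalIntegrable_sub_rpow (by linarith) t).1.const_mul _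
  · refine (IntegrableOn.mul_continuousOn_of_subset
      (intervalIntegrable_sub_rpow (r := b - 1) (by linarith) u).1
      ((continuous_rpow_const ha.le).div_const a).continuousOn measurableSet_Ioc isCompact_Icc
      Ioc_subset_Icc_self).congr ?_
    filter_upwards [ae_restrict_mem measurableSet_Ioc] with t ht
    exact (hrow_norm t ht).symm

theorem integrable_triangle_kernel_mul (ha : 0 < a) (hb : 0 < b) {f : ℝ → ℝ}
    (hf : ContinuousOn f (Icc 0 u)) :
    Integrable
      ({p : ℝ × ℝ | p.2 ≤ p.1}.indicator
        (uncurry fun t s => (u - t) ^ (b - 1) * (t - s) ^ (a - 1) * f s))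
      ((volume.restrict (Ioc 0 u)).prod (volume.restrict (Ioc 0 u))) := by
  obtain ⟨M, hM⟩ := isCompact_Icc.exists_bound_of_continuousOn hf
  have hf_meas : AEStronglyMeasurable (fun p : ℝ × ℝ => f p.2)
      ((volume.restrict (Ioc 0 u)).prod (volume.restrict (Ioc 0 u))) :=
    ((hf.mono Ioc_subset_Icc_self).aestronglyMeasurable measurableSet_Ioc).comp_snd
  have hf_bdd : ∀ᵐ p : ℝ × ℝ ∂(volume.restrict (Ioc 0 u)).prod (volume.restrict (Ioc 0 u)),
      ‖f p.2‖ ≤ M :=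
    Measure.quasiMeasurePreserving_snd.ae
      ((ae_restrict_mem measurableSet_Ioc).mono fun s hs => hM s (Ioc_subset_Icc_self hs))
  convert (integrable_triangle_kernel ha hb).mul_bdd hf_meas hf_bdd using 1
  ext p
  exact indicator_mul_left _ _ _

theorem integral_sub_rpow_mul_integral_sub_rpow (ha : 0 < a) (hb : 0 < b) (hu : 0 ≤ u)
    {f : ℝ → ℝ} (hf : ContinuousOn f (Icc 0 u)) :
    ∫ t in 0..u, (u - t) ^ (b - 1) * ∫ s in 0..t, (t - s) ^ (a - 1) * f s =
      Gamma a * Gamma b / Gamma (a + b) * ∫ s in 0..u, (u - s) ^ (a + b - 1) * f s := by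
  calc _ = ∫ t in 0..u, ∫ s in 0..t, (u - t) ^ (b - 1) * (t - s) ^ (a - 1) * f s := by
          simp_rw [← intervalIntegral.integral_const_mul, mul_assoc]
    _ = ∫ s in 0..u, ∫ t in s..u, (u - t) ^ (b - 1) * (t - s) ^ (a - 1) * f s :=
          integral_integral_swap_triangle hu (integrable_triangle_kernel_mul ha hb hf)
    _ = ∫ s in 0..u, Gamma a * Gamma b / Gamma (a + b) * (u - s) ^ (a + b - 1) * f s := by
          simp only [integral_of_le hu, integral_Ioc_eq_integral_Ioo]
          refine setIntegral_congr_fun measurableSet_Ioo fun s hs => ?_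
          rw [intervalIntegral.integral_mul_const, integral_sub_rpow_mul_sub_rpow ha hb hs.2]
    _ = _ := by simp_rw [mul_assoc, intervalIntegral.integral_const_mul]

theorem RLint_RLint (ha : 0 < a) (hb : 0 < b) (hu : 0 ≤ u) {f : ℝ → ℝ}
    (hf : ContinuousOn f (Icc 0 u)) : RLint b (RLint a f) u = RLint (a + b) f u := by
  have hΓa := (Gamma_pos_of_pos ha).ne'
  have hΓb := (Gamma_pos_of_pos hb).ne'
  simp only [RLint, mul_left_comm _ (1 / Gamma a), intervalIntegral.integral_const_mul]
  rw [integral_sub_rpow_mul_integral_sub_rpow ha hb hu hf]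
  field_simp

end Kernel

theorem RLint_one (f : ℝ → ℝ) (x : ℝ) : RLint 1 f x = ∫ t in 0..x, f t := by
  simp [RLint]

theorem RLderiv_eq_deriv_RLint (α : ℝ) (g : ℝ → ℝ) :
    RLderiv α g = deriv (RLint (1 - α) g) := by
  ext x
  rw [RLderiv, ← deriv_const_mul_field]
  congr 1
  ext u
  rw [RLint, sub_sub_cancel_left]

/-- Left-inverse property: for `0 < α < 1` and `f` continuous on `[0,∞)`,
`D^α(I^α f)(x) = f(x)` for `x > 0`. -/
theorem RLderiv_RLint
    (α : ℝ) (hα0 : 0 < α) (hα1 : α < 1)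
    (f : ℝ → ℝ) (hf : ContinuousOn f (Set.Ici 0)) :
    ∀ x > (0:ℝ), RLderiv α (RLint α f) x = f x := by
  intro x hx
  have hsemigroup : RLint (1 - α) (RLint α f) =ᶠ[nhds x] fun u => ∫ t in 0..u, f t := by
    filter_upwards [lt_mem_nhds hx] with u hu
    rw [RLint_RLint hα0 (sub_pos.2 hα1) hu.le (hf.mono Icc_subset_Ici_self), add_sub_cancel,
      RLint_one]
  have hfx : ContinuousAt f x := hf.continuousAt (Ici_mem_nhds hx)
  rw [RLderiv_eq_deriv_RLint, hsemigroup.deriv_eq]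
  exact (integral_hasDerivAt_right ((hf.mono Icc_subset_Ici_self).intervalIntegrable_of_Icc hx.le)
    ((hf.mono Ioi_subset_Ici_self).stronglyMeasurableAtFilter isOpen_Ioi x hx) hfx).deriv
end
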